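/- If the edge-weighted graph G' has a (k, 4n)-center, then G has a k-multicolored independent set. -/

import Mathlib

/-- The vertex set of the `k`-Multicolored Independent Set instance: `(i, l)` is the `(l+1)`-th
vertex of class `V_{i+1}`. -/
abbrev PV (k n : ℕ) := Fin k × Fin n

/-- Index set for the vertices `u_e` of `G'`: one for each edge of `G` between different
classes, oriented so that the class of the first endpoint is smaller. -/
abbrev CrossE (k n : ℕ) (G : SimpleGraph (PV k n)) :=
  {q : PV k n × PV k n // G.Adj q.1 q.2 ∧ q.1.1 < q.2.1}

/-- Vertices of `G'`: the vertices `p_l^i` (`Sum.inl`), the guard vertices `g_i^1, g_i^2`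
(first `Fin k × Bool` component), the vertices `a_i, b_i` (second `Fin k × Bool` component,
`false` for `a_i` and `true` for `b_i`), and the vertices `u_e`. -/
abbrev GV' (k n : ℕ) (G : SimpleGraph (PV k n)) :=
  PV k n ⊕ ((Fin k × Bool) ⊕ ((Fin k × Bool) ⊕ CrossE k n G))

/-- Edges of `G'` (one orientation each). -/
def rel' {k n : ℕ} (G : SimpleGraph (PV k n)) : GV' k n G → GV' k n G → Prop
  | Sum.inl p, Sum.inr (Sum.inl g) => p.1 = g.1
  | Sum.inl p, Sum.inr (Sum.inr (Sum.inl ab)) => p.1 = ab.1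
  | Sum.inr (Sum.inr (Sum.inr u)), Sum.inr (Sum.inr (Sum.inl ab)) =>
      ab.1 = u.1.1.1 ∨ ab.1 = u.1.2.1
  | _, _ => False

/-- The graph `G'`. -/
def G'graph {k n : ℕ} (G : SimpleGraph (PV k n)) : SimpleGraph (GV' k n G) :=
  SimpleGraph.fromRel (rel' G)

/-- Edge weights of `G'` (one orientation; `0` on non-edges). `l : Fin n` stands for the
`(l+1)`-th vertex, so e.g. the edge `(a_i, p_l^i)` has weight `n + (l+1)`, the edge
`(b_i, p_l^i)` has weight `2n − (l+1) + 1 = 2n − l`, the edge `(u_e, a_{i_m})` has weight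
`3n − (j_m+1) + 1 = 3n − j_m` and the edge `(u_e, b_{i_m})` has weight `2n + (j_m+1)`. -/
def w0 {k n : ℕ} (G : SimpleGraph (PV k n)) : GV' k n G → GV' k n G → ℕ
  | Sum.inl p, Sum.inr (Sum.inl g) => if p.1 = g.1 then 4 * n else 0
  | Sum.inl p, Sum.inr (Sum.inr (Sum.inl ab)) =>
      if p.1 = ab.1 then (if ab.2 then 2 * n - (p.2 : ℕ) else n + (p.2 : ℕ) + 1) else 0
  | Sum.inr (Sum.inr (Sum.inr u)), Sum.inr (Sum.inr (Sum.inl ab)) =>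
      if ab.1 = u.1.1.1 then
        (if ab.2 then 2 * n + (u.1.1.2 : ℕ) + 1 else 3 * n - (u.1.1.2 : ℕ))
      else if ab.1 = u.1.2.1 then
        (if ab.2 then 2 * n + (u.1.2.2 : ℕ) + 1 else 3 * n - (u.1.2.2 : ℕ))
      else 0
  | _, _ => 0

/-- The (symmetric) weight function of `G'`. -/
def wG' {k n : ℕ} (G : SimpleGraph (PV k n)) (x y : GV' k n G) : ℕ :=
  max (w0 G x y) (w0 G y x)

/-- The total weight of a walk. -/
def wWeight {V : Type*} (G : SimpleGraph V) (w : V → V → ℕ) {a b : V} (p : G.Walk a b) : ℕ :=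
  (p.darts.map fun d => w d.toProd.1 d.toProd.2).sum

/-- `K` is a `(k,r)`-center of the edge-weighted graph `(G, w)`. -/
def isCenter {V : Type*} (G : SimpleGraph V) (w : V → V → ℕ) (k r : ℕ) (K : Finset V) : Prop :=
  K.card = k ∧ ∀ u : V, ∃ v ∈ K, ∃ p : G.Walk v u, wWeight G w p ≤ r

/-!
A center within distance `4n` of a guard `g_i^b` is either that guard or some `p_l^i`, since the
guards are joined only to the `p_l^i`, by edges of weight `4n`. Covering the `2k` guards with `k`
centers therefore forces the center to consist of one vertex `p_{σ i}^i` in each class. A walk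
from `u_e` to some `p_l^i` leaves through `a_i` or `b_i` for a class `i` of an endpoint of `e`;
the weights are tuned so that both two-edge walks weigh exactly `4n + 1` when `l` is the endpoint
of `e` in `V_i`, and longer walks weigh more than `4n`. So if `e` joined two selected vertices,
`u_e` would not be covered.
-/

open SimpleGraph Finset

lemma Finset.image_eq_of_subset_image_of_card_le {α β : Type*} [DecidableEq β] {f : α → β}
    {s : Finset α} {t : Finset β} (hts : t ⊆ s.image f) (hst : #s ≤ #t) : s.image f = t :=
  (eq_of_subset_of_card_le hts (card_image_le.trans hst)).symm

lemma Finset.injOn_of_subset_image_of_card_le {α β : Type*} [DecidableEq β] {f : α → β}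
    {s : Finset α} {t : Finset β} (hts : t ⊆ s.image f) (hst : #s ≤ #t) : Set.InjOn f s :=
  card_image_iff.mp <| card_image_le.antisymm <| image_eq_of_subset_image_of_card_le hts hst ▸ hst

section WalkWeight

variable {V : Type*} (G : SimpleGraph V) (w : V → V → ℕ)

@[simp]
lemma wWeight_nil {a : V} : wWeight G w (Walk.nil : G.Walk a a) = 0 := rfl

@[simp]
lemma wWeight_cons {a b c : V} (h : G.Adj a b) (p : G.Walk b c) :
    wWeight G w (Walk.cons h p) = w a b + wWeight G w p := rfl

lemma wWeight_reverse (hw : ∀ a b, w a b = w b a) {a b : V} (p : G.Walk a b) :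
    wWeight G w p.reverse = wWeight G w p := by
  simp only [wWeight, Walk.darts_reverse, List.map_reverse, List.sum_reverse, List.map_map]
  congr 1
  exact List.map_congr_left fun d _ => hw _ _

end WalkWeight

namespace G'graph

variable {k n : ℕ} {G : SimpleGraph (PV k n)}

lemma wG'_comm (x y : GV' k n G) : wG' G x y = wG' G y x := max_comm _ _

lemma wWeight_reverse {x y : GV' k n G} (p : (G'graph G).Walk x y) :
    wWeight (G'graph G) (wG' G) p.reverse = wWeight (G'graph G) (wG' G) p :=
  _root_.wWeight_reverse _ _ wG'_comm p

lemma wG'_guard_inl {g : Fin k × Bool} {l : Fin n} :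
    wG' G (Sum.inr (Sum.inl g)) (Sum.inl (g.1, l)) = 4 * n := by
  simp [wG', w0]

lemma wG'_ab_inl {ab : Fin k × Bool} {l : Fin n} :
    wG' G (Sum.inr (Sum.inr (Sum.inl ab))) (Sum.inl (ab.1, l)) =
      if ab.2 then 2 * n - l else n + l + 1 := by
  simp [wG', w0]

lemma wG'_u_ab (e : CrossE k n G) {x : PV k n} (hx : x = e.1.1 ∨ x = e.1.2)
    {ab : Fin k × Bool} (hab : ab.1 = x.1) :
    wG' G (Sum.inr (Sum.inr (Sum.inr e))) (Sum.inr (Sum.inr (Sum.inl ab))) =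
      if ab.2 then 2 * n + x.2 + 1 else 3 * n - x.2 := by
  rcases hx with rfl | rfl
  · simp [wG', w0, hab]
  · simp [wG', w0, hab, Fin.ne_of_gt e.2.2]

lemma exists_eq_inl_of_adj_guard {g : Fin k × Bool} {x : GV' k n G}
    (h : (G'graph G).Adj (Sum.inr (Sum.inl g)) x) : ∃ l : Fin n, x = Sum.inl (g.1, l) := by
  rcases x with ⟨i, l⟩ | _ | _ | _ <;> simp [G'graph, rel'] at h
  exact ⟨l, by rw [h]⟩

lemma succ_le_wG'_inl {p : PV k n} {x : GV' k n G} (h : (G'graph G).Adj (Sum.inl p) x) :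
    n + 1 ≤ wG' G (Sum.inl p) x := by
  have := p.2.isLt
  rcases x with _ | g | ⟨i, _ | _⟩ | _ <;> simp [G'graph, rel'] at h <;>
    simp [wG', w0, h] <;> omega

lemma exists_eq_ab_of_adj_u {e : CrossE k n G} {y : GV' k n G}
    (h : (G'graph G).Adj (Sum.inr (Sum.inr (Sum.inr e))) y) :
    ∃ ab : Fin k × Bool, y = Sum.inr (Sum.inr (Sum.inl ab)) ∧
      ∃ x : PV k n, (x = e.1.1 ∨ x = e.1.2) ∧ ab.1 = x.1 := by
  rcases y with _ | _ | ab | _ <;> simp [G'graph, rel'] at h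
  rcases h with h | h
  · exact ⟨ab, rfl, _, .inl rfl, h⟩
  · exact ⟨ab, rfl, _, .inr rfl, h⟩

lemma exists_eq_inl_or_le_wG'_of_adj_ab {ab : Fin k × Bool} {y : GV' k n G}
    (h : (G'graph G).Adj (Sum.inr (Sum.inr (Sum.inl ab))) y) :
    (∃ l : Fin n, y = Sum.inl (ab.1, l)) ∨
      2 * n + 1 ≤ wG' G (Sum.inr (Sum.inr (Sum.inl ab))) y := by
  rcases y with ⟨i, l⟩ | _ | _ | e
  · simp [G'graph, rel'] at h
    exact .inl ⟨l, by rw [h]⟩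
  · simp [G'graph, rel'] at h
  · simp [G'graph, rel'] at h
  · obtain ⟨_, ⟨⟩, x, hx, hab⟩ := exists_eq_ab_of_adj_u h.symm
    rw [wG'_comm, wG'_u_ab e hx hab]
    have := x.2.isLt
    right
    split <;> omega

lemma eq_guard_or_inl_of_wWeight_le {g : Fin k × Bool} {v : GV' k n G}
    (q : (G'graph G).Walk v (Sum.inr (Sum.inl g)))
    (hq : wWeight (G'graph G) (wG' G) q ≤ 4 * n) :
    v = Sum.inr (Sum.inl g) ∨ ∃ l : Fin n, v = Sum.inl (g.1, l) := by
  rw [← wWeight_reverse] at hq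
  generalize q.reverse = q at hq
  cases q with
  | nil => exact .inl rfl
  | cons h q =>
    obtain ⟨l, rfl⟩ := exists_eq_inl_of_adj_guard h
    cases q with
    | nil => exact .inr ⟨l, rfl⟩
    | cons h' _ =>
      have := succ_le_wG'_inl h'
      simp only [wWeight_cons, wG'_guard_inl] at hq
      omega

lemma four_mul_lt_wWeight_of_walk_u_inl {σ : Fin k → Fin n} {e : CrossE k n G}
    (he : ∀ x : PV k n, x = e.1.1 ∨ x = e.1.2 → x.2 = σ x.1) {j : Fin k}
    (q : (G'graph G).Walk (Sum.inr (Sum.inr (Sum.inr e))) (Sum.inl (j, σ j))) :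
    4 * n < wWeight (G'graph G) (wG' G) q := by
  obtain _ | ⟨h, q⟩ := q
  obtain ⟨ab, rfl, x, hx, hab⟩ := exists_eq_ab_of_adj_u h
  have hx2 := x.2.isLt
  obtain _ | ⟨h', q⟩ := q
  simp only [wWeight_cons, wG'_u_ab e hx hab]
  rcases exists_eq_inl_or_le_wG'_of_adj_ab h' with ⟨l, rfl⟩ | hw
  · obtain _ | ⟨h'', q⟩ := q
    · have hσ : x.2 = σ ab.1 := hab ▸ he x hx
      rw [wWeight_nil, wG'_ab_inl, ← hσ]
      split <;> omega
    · have := succ_le_wG'_inl h''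
      have := l.isLt
      simp only [wWeight_cons, wG'_ab_inl]
      split <;> omega
  · split at * <;> omega

/-- The class `i` of the vertices `p_l^i` and `g_i^b`. -/
def guardClass : GV' k n G → Option (Fin k)
  | Sum.inl p => some p.1
  | Sum.inr (Sum.inl g) => some g.1
  | _ => none

lemma exists_selection_of_isCenter {K : Finset (GV' k n G)}
    (hK : isCenter (G'graph G) (wG' G) k (4 * n) K) :
    ∃ σ : Fin k → Fin n, ∀ v ∈ K, ∃ j, v = Sum.inl (j, σ j) := by
  classical
  obtain ⟨hcard, hcov⟩ := hK
  have hguard (g : Fin k × Bool) :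
      Sum.inr (Sum.inl g) ∈ K ∨ ∃ l, Sum.inl (g.1, l) ∈ K := by
    obtain ⟨v, hv, q, hq⟩ := hcov _
    rcases eq_guard_or_inl_of_wWeight_le q hq with rfl | ⟨l, rfl⟩
    exacts [.inl hv, .inr ⟨l, hv⟩]
  have hsub : univ.image some ⊆ K.image guardClass := by
    simp only [subset_iff, mem_image, mem_univ, true_and, forall_exists_index,
      forall_apply_eq_imp_iff]
    intro i
    rcases hguard (i, false) with h | ⟨l, h⟩
    exacts [⟨_, h, rfl⟩, ⟨_, h, rfl⟩]
  have hcard' : #K ≤ #(univ.image (some : Fin k → Option (Fin k))) := by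
    rw [card_image_of_injective _ (Option.some_injective _), card_univ, Fintype.card_fin, hcard]
  have himage := image_eq_of_subset_image_of_card_le hsub hcard'
  have hinj := injOn_of_subset_image_of_card_le hsub hcard'
  have hp (i : Fin k) : ∃ l, Sum.inl (i, l) ∈ K := by
    rcases hguard (i, false) with h₀ | h₀
    · rcases hguard (i, true) with h₁ | h₁
      · simpa using hinj h₀ h₁ rfl
      · exact h₁
    · exact h₀
  choose σ hσ using hp
  refine ⟨σ, fun v hv => ?_⟩
  obtain ⟨j, -, hj⟩ := mem_image.mp (himage ▸ mem_image_of_mem guardClass hv)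
  exact ⟨j, hinj hv (hσ j) hj.symm⟩

lemma not_adj_of_isCenter {K : Finset (GV' k n G)}
    (hK : isCenter (G'graph G) (wG' G) k (4 * n) K) {σ : Fin k → Fin n}
    (hσ : ∀ v ∈ K, ∃ j, v = Sum.inl (j, σ j)) {i₁ i₂ : Fin k} (hlt : i₁ < i₂) :
    ¬ G.Adj (i₁, σ i₁) (i₂, σ i₂) := by
  intro hadj
  let e : CrossE k n G := ⟨((i₁, σ i₁), (i₂, σ i₂)), hadj, hlt⟩
  obtain ⟨v, hv, q, hq⟩ := hK.2 (Sum.inr (Sum.inr (Sum.inr e)))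
  obtain ⟨j, rfl⟩ := hσ v hv
  have hlong := four_mul_lt_wWeight_of_walk_u_inl (e := e) (by rintro x (rfl | rfl) <;> rfl)
    q.reverse
  rw [wWeight_reverse] at hlong
  omega

end G'graph

theorem stmt6_general (k n : ℕ) (G : SimpleGraph (PV k n))
    (hcenter : ∃ K : Finset (GV' k n G), isCenter (G'graph G) (wG' G) k (4 * n) K) :
    ∃ S : Finset (PV k n), (∀ i : Fin k, ∃! l : Fin n, (i, l) ∈ S) ∧
      ∀ u ∈ S, ∀ v ∈ S, ¬ G.Adj u v := by
  obtain ⟨K, hK⟩ := hcenter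
  obtain ⟨σ, hσ⟩ := G'graph.exists_selection_of_isCenter hK
  refine ⟨univ.image fun i => (i, σ i), fun i => ⟨σ i, by simp, by simp⟩, ?_⟩
  simp only [mem_image, mem_univ, true_and, forall_exists_index, forall_apply_eq_imp_iff]
  intro i₁ i₂ hadj
  rcases lt_trichotomy i₁ i₂ with h | rfl | h
  · exact G'graph.not_adj_of_isCenter hK hσ h hadj
  · exact G.loopless.irrefl _ hadj
  · exact G'graph.not_adj_of_isCenter hK hσ h hadj.symm

/-- If `G'` has a `(k, 4n)`-center, then `G` has a `k`-multicolored independent set. -/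
theorem stmt6 (k n : ℕ) (hk : 1 ≤ k) (hn : 1 ≤ n) (G : SimpleGraph (PV k n))
    (hclique : ∀ (i : Fin k) (l l' : Fin n), l ≠ l' → G.Adj (i, l) (i, l'))
    (hcenter : ∃ K : Finset (GV' k n G), isCenter (G'graph G) (wG' G) k (4 * n) K) :
    ∃ S : Finset (PV k n), (∀ i : Fin k, ∃! l : Fin n, (i, l) ∈ S) ∧
      ∀ u ∈ S, ∀ v ∈ S, ¬ G.Adj u v :=
  stmt6_general k n G hcenter
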